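/- arXiv:1904.01391 — 5 statements merged into one kernel-verified Lean document; each statement's English description precedes it below -/
import Mathlib

section
/- Let E be a nontrivial finite-dimensional real inner product space, let A : E → E be an invertible continuous linear map, and let χ > 0. If ξ ∈ E is a nonzero vector such that ∑_{m=0}^∞ ‖A^m ξ‖² e^{2χm} < ∞, then limsup_{m→∞} (1/m)·log‖A^m ξ‖ < −χ; equivalently, there exist χ' > χ and C > 0 such that ‖A^m ξ‖ ≤ C e^{−χ' m} for all m ≥ 0. -/
/-!
Put `B = e^χ • A` and `s v = ∑ ‖Bᵐ v‖²` on the subspace of vectors whose `B`-orbit is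
square-summable. Splitting off the first term gives `s (B v) = s v - ‖v‖²`, and on this
finite-dimensional subspace `s v ≤ K ‖v‖²`, so `s (B v) ≤ K / (K + 1) * s v`. Hence
`‖Bᵐ ξ‖² ≤ s (Bᵐ ξ)` decays geometrically, i.e. `‖Aᵐ ξ‖` decays at a rate strictly faster
than `e^{-χ m}`. Invertibility of `A` bounds `‖Aᵐ ξ‖` below by `‖ξ‖ ‖A⁻¹‖⁻ᵐ`, which keeps
`(1/m) log ‖Aᵐ ξ‖` bounded below, so its `limsup` is not the junk value of an unbounded sequence.
-/

open Filter Real Topology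

section

variable {𝕜 E : Type*} [NontriviallyNormedField 𝕜] [NormedAddCommGroup E] [NormedSpace 𝕜 E]

namespace ContinuousLinearMap

variable (B : E →L[𝕜] E)

def l2OrbitSubmodule : Submodule 𝕜 E where
  carrier := {v | Memℓp (fun m : ℕ => (B ^ m) v) 2}
  add_mem' {v w} hv hw := by
    have hsplit : (fun m : ℕ => (B ^ m) (v + w)) = (fun m => (B ^ m) v) + fun m => (B ^ m) w :=
      funext fun m => map_add _ v w
    simpa only [Set.mem_ofPred_eq, hsplit] using hv.add hw
  zero_mem' := by
    show Memℓp (fun m : ℕ => (B ^ m) 0) 2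
    simp only [map_zero]
    exact zero_memℓp
  smul_mem' c v hv := by
    have hsplit : (fun m : ℕ => (B ^ m) (c • v)) = c • fun m => (B ^ m) v :=
      funext fun m => map_smul _ c v
    simpa only [Set.mem_ofPred_eq, hsplit] using hv.const_smul c

def l2OrbitMap : B.l2OrbitSubmodule →ₗ[𝕜] lp (fun _ : ℕ => E) 2 where
  toFun v := ⟨fun m => (B ^ m) v, v.2⟩
  map_add' v w := lp.ext <| funext fun m => map_add (B ^ m) (v : E) w
  map_smul' c v := lp.ext <| funext fun m => map_smul (B ^ m) c (v : E)

noncomputable def orbitEnergy (v : E) : ℝ := ∑' m : ℕ, ‖(B ^ m) v‖ ^ 2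

variable {B}

theorem mem_l2OrbitSubmodule_iff {v : E} :
    v ∈ B.l2OrbitSubmodule ↔ Summable fun m : ℕ => ‖(B ^ m) v‖ ^ 2 := by
  show Memℓp _ 2 ↔ _
  rw [memℓp_gen_iff (by norm_num)]
  norm_num

theorem norm_l2OrbitMap_sq (v : B.l2OrbitSubmodule) : ‖B.l2OrbitMap v‖ ^ 2 = B.orbitEnergy v := by
  have h := lp.norm_rpow_eq_tsum (p := 2) (by norm_num) (B.l2OrbitMap v)
  norm_num at h
  exact h

theorem orbitEnergy_nonneg (v : E) : 0 ≤ B.orbitEnergy v :=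
  tsum_nonneg fun _ => sq_nonneg _

theorem norm_sq_le_orbitEnergy {v : E} (hv : v ∈ B.l2OrbitSubmodule) :
    ‖v‖ ^ 2 ≤ B.orbitEnergy v := by
  have h := (mem_l2OrbitSubmodule_iff.1 hv).le_tsum 0 fun _ _ => sq_nonneg _
  rwa [pow_zero, one_apply_eq_self] at h

theorem pow_succ_apply (m : ℕ) (v : E) : (B ^ (m + 1)) v = (B ^ m) (B v) := by
  rw [pow_succ, mul_apply_eq_comp]

theorem apply_mem_l2OrbitSubmodule {v : E} (hv : v ∈ B.l2OrbitSubmodule) :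
    B v ∈ B.l2OrbitSubmodule := by
  rw [mem_l2OrbitSubmodule_iff] at hv ⊢
  simpa only [pow_succ_apply] using (summable_nat_add_iff 1).2 hv

theorem pow_apply_mem_l2OrbitSubmodule {v : E} (hv : v ∈ B.l2OrbitSubmodule) (m : ℕ) :
    (B ^ m) v ∈ B.l2OrbitSubmodule := by
  induction m with
  | zero => simpa using hv
  | succ m ih => rw [pow_succ', mul_apply_eq_comp]; exact apply_mem_l2OrbitSubmodule ih

theorem orbitEnergy_apply {v : E} (hv : v ∈ B.l2OrbitSubmodule) :
    B.orbitEnergy (B v) = B.orbitEnergy v - ‖v‖ ^ 2 := by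
  rw [orbitEnergy, orbitEnergy, (mem_l2OrbitSubmodule_iff.1 hv).tsum_eq_zero_add]
  simp only [pow_succ_apply, pow_zero, one_apply_eq_self]
  ring

theorem exists_orbitEnergy_le [CompleteSpace 𝕜] [FiniteDimensional 𝕜 E] (B : E →L[𝕜] E) :
    ∃ K, 0 < K ∧ ∀ v ∈ B.l2OrbitSubmodule, B.orbitEnergy v ≤ K * ‖v‖ ^ 2 := by
  -- `√(orbitEnergy B v)` is the norm of a linear map from a finite-dimensional space into `ℓ²`.
  set T := LinearMap.toContinuousLinearMap B.l2OrbitMap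
  refine ⟨‖T‖ ^ 2 + 1, by positivity, fun v hv => ?_⟩
  calc B.orbitEnergy v = ‖T ⟨v, hv⟩‖ ^ 2 := (norm_l2OrbitMap_sq ⟨v, hv⟩).symm
    _ ≤ (‖T‖ * ‖v‖) ^ 2 := by gcongr; exact T.le_opNorm ⟨v, hv⟩
    _ ≤ (‖T‖ ^ 2 + 1) * ‖v‖ ^ 2 := by nlinarith [sq_nonneg ‖v‖]

theorem exists_orbitEnergy_apply_le [CompleteSpace 𝕜] [FiniteDimensional 𝕜 E] (B : E →L[𝕜] E) :
    ∃ ρ ∈ Set.Ioo (0 : ℝ) 1,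
      ∀ v ∈ B.l2OrbitSubmodule, B.orbitEnergy (B v) ≤ ρ * B.orbitEnergy v := by
  obtain ⟨K, hK, hbound⟩ := exists_orbitEnergy_le B
  refine ⟨K / (K + 1), ⟨by positivity, (div_lt_one (by positivity)).2 (by linarith)⟩,
    fun v hv => ?_⟩
  have hs := hbound v hv
  have hs0 := orbitEnergy_nonneg (B := B) v
  rw [orbitEnergy_apply hv, div_mul_eq_mul_div, le_div_iff₀ (by positivity)]
  nlinarith

theorem orbitEnergy_pow_apply_le {ρ : ℝ} (hρ : 0 ≤ ρ)
    (hcontract : ∀ v ∈ B.l2OrbitSubmodule, B.orbitEnergy (B v) ≤ ρ * B.orbitEnergy v)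
    {v : E} (hv : v ∈ B.l2OrbitSubmodule) (m : ℕ) :
    B.orbitEnergy ((B ^ m) v) ≤ ρ ^ m * B.orbitEnergy v := by
  induction m with
  | zero => simp
  | succ m ih =>
    calc B.orbitEnergy ((B ^ (m + 1)) v) = B.orbitEnergy (B ((B ^ m) v)) := by
          rw [pow_succ', mul_apply_eq_comp]
      _ ≤ ρ * B.orbitEnergy ((B ^ m) v) := hcontract _ (pow_apply_mem_l2OrbitSubmodule hv m)
      _ ≤ ρ ^ (m + 1) * B.orbitEnergy v := by rw [pow_succ', mul_assoc]; gcongr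

theorem exists_norm_pow_apply_le [CompleteSpace 𝕜] [FiniteDimensional 𝕜 E] {v : E}
    (hv : v ∈ B.l2OrbitSubmodule) :
    ∃ θ ∈ Set.Ioo (0 : ℝ) 1, ∀ m : ℕ, ‖(B ^ m) v‖ ≤ √(B.orbitEnergy v) * θ ^ m := by
  obtain ⟨ρ, ⟨hρ0, hρ1⟩, hcontract⟩ := exists_orbitEnergy_apply_le B
  refine ⟨√ρ, ⟨Real.sqrt_pos.2 hρ0, (Real.sqrt_lt' one_pos).2 (by simpa using hρ1)⟩, fun m => ?_⟩
  refine le_of_pow_le_pow_left₀ two_ne_zero (by positivity) ?_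
  calc ‖(B ^ m) v‖ ^ 2 ≤ B.orbitEnergy ((B ^ m) v) :=
        norm_sq_le_orbitEnergy (pow_apply_mem_l2OrbitSubmodule hv m)
    _ ≤ ρ ^ m * B.orbitEnergy v := orbitEnergy_pow_apply_le hρ0.le hcontract hv m
    _ = (√(B.orbitEnergy v) * √ρ ^ m) ^ 2 := by
        rw [mul_pow, ← pow_mul, mul_comm m, pow_mul, Real.sq_sqrt hρ0.le,
          Real.sq_sqrt (orbitEnergy_nonneg v), mul_comm]

theorem norm_smul_pow_apply (c : 𝕜) (B : E →L[𝕜] E) (v : E) (m : ℕ) :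
    ‖((c • B) ^ m) v‖ = ‖c‖ ^ m * ‖(B ^ m) v‖ := by
  rw [smul_pow, smul_apply, norm_smul, norm_pow]

end ContinuousLinearMap

theorem ContinuousLinearEquiv.norm_le_norm_symm_pow_mul (A : E ≃L[𝕜] E) (v : E) (m : ℕ) :
    ‖v‖ ≤ ‖(A.symm : E →L[𝕜] E)‖ ^ m * ‖((A : E →L[𝕜] E) ^ m) v‖ := by
  induction m with
  | zero => simp
  | succ m ih =>
    set M := ‖(A.symm : E →L[𝕜] E)‖
    have hstep : ‖((A : E →L[𝕜] E) ^ m) v‖ ≤ M * ‖((A : E →L[𝕜] E) ^ (m + 1)) v‖ := by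
      rw [pow_succ', mul_apply_eq_comp]
      simpa using (A.symm : E →L[𝕜] E).le_opNorm (A (((A : E →L[𝕜] E) ^ m) v))
    calc ‖v‖ ≤ M ^ m * ‖((A : E →L[𝕜] E) ^ m) v‖ := ih
      _ ≤ M ^ (m + 1) * ‖((A : E →L[𝕜] E) ^ (m + 1)) v‖ := by
        rw [pow_succ, mul_assoc]; gcongr

theorem tendsto_inv_mul_log_mul_pow {c b : ℝ} (hc : 0 < c) (hb : 0 < b) :
    Tendsto (fun m : ℕ => (1 / (m : ℝ)) * log (c * b ^ m)) atTop (𝓝 (log b)) := by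
  have h := (tendsto_const_div_atTop_nhds_zero_nat (log c)).add_const (log b)
  rw [zero_add] at h
  refine h.congr' ?_
  filter_upwards [eventually_ne_atTop 0] with m hm
  rw [log_mul hc.ne' (pow_pos hb m).ne', log_pow]
  field_simp

theorem limsup_inv_mul_log_le {u : ℕ → ℝ} {c b C ν : ℝ} (hc : 0 < c) (hb : 0 < b) (hC : 0 < C)
    (hlow : ∀ m, c * b ^ m ≤ u m) (hup : ∀ m : ℕ, u m ≤ C * exp (ν * m)) :
    limsup (fun m : ℕ => (1 / (m : ℝ)) * log (u m)) atTop ≤ ν := by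
  have hlog_mono {x y : ℝ} (hx : 0 < x) (hxy : x ≤ y) (m : ℕ) :
      (1 / (m : ℝ)) * log x ≤ (1 / (m : ℝ)) * log y := by
    gcongr
  have hbelow := tendsto_inv_mul_log_mul_pow hc hb
  have habove := tendsto_inv_mul_log_mul_pow hC (exp_pos ν)
  rw [log_exp] at habove
  calc limsup (fun m : ℕ => (1 / (m : ℝ)) * log (u m)) atTop
      ≤ limsup (fun m : ℕ => (1 / (m : ℝ)) * log (C * exp ν ^ m)) atTop := by
        refine limsup_le_limsup (Eventually.of_forall fun m => ?_) ?_ habove.isBoundedUnder_le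
        · dsimp only
          rw [← exp_nat_mul, mul_comm (m : ℝ)]
          exact hlog_mono ((by positivity : 0 < c * b ^ m).trans_le (hlow m)) (hup m) m
        · exact (hbelow.isBoundedUnder_ge.mono_ge (Eventually.of_forall fun m =>
            hlog_mono (by positivity) (hlow m) m)).isCoboundedUnder_le
    _ = ν := habove.limsup_eq

end

theorem periodic_summable_implies_hyperbolic_fixed_point_general
    {E : Type*} [NormedAddCommGroup E] [InnerProductSpace ℝ E]
    [FiniteDimensional ℝ E]
    (A : E ≃L[ℝ] E) (χ : ℝ) (ξ : E) (hξ : ξ ≠ 0)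
    (hsum : Summable fun m : ℕ => ‖((A : E →L[ℝ] E) ^ m) ξ‖ ^ 2 * Real.exp (2 * χ * m)) :
    Filter.limsup (fun m : ℕ => (1 / (m : ℝ)) * Real.log ‖((A : E →L[ℝ] E) ^ m) ξ‖)
      Filter.atTop < -χ ∧
    ∃ χ' C : ℝ, χ < χ' ∧ 0 < C ∧
      ∀ m : ℕ, ‖((A : E →L[ℝ] E) ^ m) ξ‖ ≤ C * Real.exp (-χ' * m) := by
  set B := exp χ • (A : E →L[ℝ] E)
  have hB (m : ℕ) : ‖(B ^ m) ξ‖ = exp (χ * m) * ‖((A : E →L[ℝ] E) ^ m) ξ‖ := by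
    rw [ContinuousLinearMap.norm_smul_pow_apply, norm_of_nonneg (exp_pos χ).le, ← exp_nat_mul,
      mul_comm (m : ℝ)]
  have hξB : ξ ∈ B.l2OrbitSubmodule := by
    refine ContinuousLinearMap.mem_l2OrbitSubmodule_iff.2 (hsum.congr fun m => ?_)
    rw [hB, mul_pow, ← exp_nat_mul, mul_comm]
    congr 2
    push_cast
    ring
  obtain ⟨θ, ⟨hθ0, hθ1⟩, hdecay⟩ := ContinuousLinearMap.exists_norm_pow_apply_le hξB
  set C := √(B.orbitEnergy ξ)
  have hC : 0 < C := Real.sqrt_pos.2 <|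
    (pow_pos (norm_pos_iff.2 hξ) 2).trans_le (ContinuousLinearMap.norm_sq_le_orbitEnergy hξB)
  have hχ : χ < χ - log θ := by linarith [log_neg hθ0 hθ1]
  have hupper (m : ℕ) : ‖((A : E →L[ℝ] E) ^ m) ξ‖ ≤ C * exp (-(χ - log θ) * m) := by
    have hexp : exp (-(χ - log θ) * m) = θ ^ m / exp (χ * m) := by
      rw [show -(χ - log θ) * m = m * log θ - χ * m by ring, exp_sub, exp_nat_mul, exp_log hθ0]
    rw [hexp, ← mul_div_assoc, le_div_iff₀ (exp_pos _), mul_comm, ← hB]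
    exact hdecay m
  have : Nontrivial E := nontrivial_of_ne ξ 0 hξ
  have hM := A.norm_symm_pos
  have hlower (m : ℕ) : ‖ξ‖ * ‖(A.symm : E →L[ℝ] E)‖⁻¹ ^ m ≤ ‖((A : E →L[ℝ] E) ^ m) ξ‖ := by
    rw [inv_pow, ← div_eq_mul_inv, div_le_iff₀ (by positivity), mul_comm]
    exact A.norm_le_norm_symm_pow_mul ξ m
  refine ⟨?_, χ - log θ, C, hχ, hC, hupper⟩
  calc _ ≤ -(χ - log θ) :=
        limsup_inv_mul_log_le (norm_pos_iff.2 hξ) (inv_pos.2 hM) hC hlower hupper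
    _ < -χ := by linarith

/-- If `A` is an invertible continuous linear map of a nontrivial
finite-dimensional real inner product space `E`, `χ > 0`, and `ξ ≠ 0` satisfies
`∑_{m} ‖A^m ξ‖² e^{2χm} < ∞`, then `limsup (1/m) log ‖A^m ξ‖ < -χ`; equivalently
there are `χ' > χ` and `C > 0` with `‖A^m ξ‖ ≤ C e^{-χ' m}` for all `m`. -/
theorem periodic_summable_implies_hyperbolic_fixed_point
    {E : Type*} [NormedAddCommGroup E] [InnerProductSpace ℝ E]
    [Nontrivial E] [FiniteDimensional ℝ E]
    (A : E ≃L[ℝ] E) (χ : ℝ) (hχ : 0 < χ) (ξ : E) (hξ : ξ ≠ 0)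
    (hsum : Summable fun m : ℕ => ‖((A : E →L[ℝ] E) ^ m) ξ‖ ^ 2 * Real.exp (2 * χ * m)) :
    Filter.limsup (fun m : ℕ => (1 / (m : ℝ)) * Real.log ‖((A : E →L[ℝ] E) ^ m) ξ‖)
      Filter.atTop < -χ ∧
    ∃ χ' C : ℝ, χ < χ' ∧ 0 < C ∧
      ∀ m : ℕ, ‖((A : E →L[ℝ] E) ^ m) ξ‖ ≤ C * Real.exp (-χ' * m) :=
  periodic_summable_implies_hyperbolic_fixed_point_general A χ ξ hξ hsum
end

section
/- Let E be a nontrivial finite-dimensional real inner product space, let χ > 0, let l ≥ 1 be an integer, and let (A_n)_{n≥0} be a sequence of invertible continuous linear maps of E which is l-periodic, i.e. A_{n+l} = A_n for all n ≥ 0. Define B_0 = id_E and B_{m+1} = A_m ∘ B_m for m ≥ 0. If for every ξ ∈ E one has ∑_{m=0}^∞ ‖B_m ξ‖² e^{2χm} < ∞, then for every nonzero ξ ∈ E, limsup_{m→∞} (1/m)·log‖B_m ξ‖ < −χ. -/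
open Filter Real Topology

/-! Along multiples of the period the cocycle is the power `B l ^ q`, so summability gives
`(exp (χ l) • B l) ^ q ξ → 0` for every `ξ`. In finite dimension this is convergence in operator
norm, so these powers decay exponentially, and `‖B m‖ ≤ K exp (-(χ + δ) m)` for some `δ > 0`.
Since the inverses of the periodic family `A` are uniformly bounded, `‖B m ξ‖` also admits an
exponential lower bound; this keeps `(1/m) log ‖B m ξ‖` bounded below, which is what makes its
real-valued `limsup` the genuine one rather than a junk value. -/

theorem ContinuousLinearMap.tendsto_zero_of_tendsto_apply {𝕜 E F ι : Type*}
    [NontriviallyNormedField 𝕜] [CompleteSpace 𝕜] [NormedAddCommGroup E] [NormedSpace 𝕜 E]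
    [FiniteDimensional 𝕜 E] [NormedAddCommGroup F] [NormedSpace 𝕜 F] {l : Filter ι}
    {S : ι → E →L[𝕜] F}
    (h : ∀ x, Tendsto (fun i => S i x) l (𝓝 0)) : Tendsto S l (𝓝 0) := by
  set b := Module.finBasis 𝕜 E
  obtain ⟨C, -, hC⟩ := b.exists_opNorm_le (F := F)
  have hbound : Tendsto (fun i => C * ∑ j, ‖S i (b j)‖) l (𝓝 0) := by
    simpa using (tendsto_finsetSum Finset.univ fun j _ => (h (b j)).norm).const_mul C
  refine squeeze_zero_norm (fun i => hC (by positivity) fun j => ?_) hbound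
  exact Finset.single_le_sum (f := fun j => ‖S i (b j)‖) (fun _ _ => norm_nonneg _)
    (Finset.mem_univ j)

theorem tendsto_zero_of_summable_sq {y : ℕ → ℝ} (h : Summable fun m => y m ^ 2) :
    Tendsto y atTop (𝓝 0) := by
  rw [tendsto_zero_iff_norm_tendsto_zero]
  simpa [Function.comp_def, sqrt_sq_eq_abs] using
    (continuous_sqrt.tendsto 0).comp h.tendsto_atTop_zero

theorem Function.Periodic.bddAbove_range_nat {α : Type*} [SemilatticeSup α] [Nonempty α]
    {f : ℕ → α} {l : ℕ} (hf : Function.Periodic f l)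
    (hl : 0 < l) : BddAbove (Set.range f) := by
  refine ((Set.finite_Iio l).image f).bddAbove.mono ?_
  rintro _ ⟨m, rfl⟩
  exact ⟨m % l, Nat.mod_lt m hl, hf.map_mod_nat m⟩

theorem exists_le_mul_exp_of_submultiplicative_along_multiples {u v : ℕ → ℝ} {p : ℕ} {C δ : ℝ}
    (hp : 0 < p) (hu : ∀ k, 0 ≤ u k) (hv₀ : ∀ q, 0 ≤ v q)
    (hv : ∀ q : ℕ, v q ≤ C * exp (-δ * (p * q)))
    (huv : ∀ s q, u (s + p * q) ≤ u s * v q) :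
    ∃ K, ∀ k : ℕ, u k ≤ K * exp (-δ * k) := by
  have hC : 0 ≤ C := by simpa using (hv₀ 0).trans (hv 0)
  refine ⟨C * ∑ s ∈ Finset.range p, u s * exp (δ * s), fun k => ?_⟩
  set s := k % p
  set q := k / p
  have hk : s + p * q = k := Nat.mod_add_div k p
  have hkℝ : (k : ℝ) = s + p * q := by exact_mod_cast hk.symm
  have hs : s ∈ Finset.range p := Finset.mem_range.2 (Nat.mod_lt k hp)
  calc u k ≤ u s * v q := hk ▸ huv s q
    _ ≤ u s * (C * exp (-δ * (p * q))) := mul_le_mul_of_nonneg_left (hv q) (hu s)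
    _ = C * (u s * exp (δ * s)) * exp (-δ * k) := by
        rw [mul_assoc C, mul_assoc (u s), ← exp_add, hkℝ]; ring_nf
    _ ≤ (C * ∑ s ∈ Finset.range p, u s * exp (δ * s)) * exp (-δ * k) := by
        gcongr
        exact Finset.single_le_sum (f := fun j => u j * exp (δ * j))
          (fun j _ => mul_nonneg (hu j) (exp_pos _).le) hs

theorem norm_pow_add_mul_le {R : Type*} [SeminormedRing R] (a : R) (s p q : ℕ) :
    ‖a ^ (s + p * q)‖ ≤ ‖a ^ s‖ * ‖a ^ p‖ ^ q := by
  induction q with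
  | zero => simp
  | succ q ih =>
    calc ‖a ^ (s + p * (q + 1))‖ = ‖a ^ (s + p * q) * a ^ p‖ := by rw [← pow_add]; ring_nf
      _ ≤ ‖a ^ (s + p * q)‖ * ‖a ^ p‖ := norm_mul_le _ _
      _ ≤ ‖a ^ s‖ * ‖a ^ p‖ ^ q * ‖a ^ p‖ := by gcongr
      _ = ‖a ^ s‖ * ‖a ^ p‖ ^ (q + 1) := by ring

theorem exists_norm_pow_le_mul_exp_of_tendsto_zero {R : Type*} [SeminormedRing R] {a : R}
    (h : Tendsto (fun k => ‖a ^ k‖) atTop (𝓝 0)) :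
    ∃ C δ, 0 < δ ∧ ∀ k : ℕ, ‖a ^ k‖ ≤ C * exp (-δ * k) := by
  obtain ⟨p, hap, hp⟩ :=
    ((h.eventually (gt_mem_nhds (exp_pos (-1)))).and (eventually_gt_atTop 0)).exists
  have hv : ∀ q : ℕ, ‖a ^ p‖ ^ q ≤ 1 * exp (-(1 / p) * (p * q)) := fun q => by
    have hp' : (p : ℝ) ≠ 0 := by positivity
    rw [one_mul, show -(1 / p) * (p * q : ℝ) = q * (-1) by field_simp, exp_nat_mul]
    exact pow_le_pow_left₀ (norm_nonneg _) hap.le q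
  obtain ⟨C, hC⟩ := exists_le_mul_exp_of_submultiplicative_along_multiples hp
    (fun _ => norm_nonneg _) (fun q => by positivity) hv fun s q => norm_pow_add_mul_le a s p q
  exact ⟨C, 1 / p, by positivity, hC⟩

theorem limsup_one_div_mul_log_le {u : ℕ → ℝ} {c b K a : ℝ} (hc : 0 < c)
    (hlow : ∀ m : ℕ, c ≤ exp (b * m) * u m) (hup : ∀ m : ℕ, u m ≤ K * exp (-a * m)) :
    limsup (fun m : ℕ => 1 / (m : ℝ) * log (u m)) atTop ≤ -a := by
  have hu : ∀ m, 0 < u m := fun m => pos_of_mul_pos_right (hc.trans_le (hlow m)) (exp_pos _).le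
  have hK : 0 < K := by simpa using (hu 0).trans_le (hup 0)
  have hlim : ∀ α β : ℝ, Tendsto (fun m : ℕ => 1 / (m : ℝ) * (α + β * m)) atTop (𝓝 β) := by
    intro α β
    have := (tendsto_one_div_atTop_nhds_zero_nat.const_mul α).add_const β
    rw [mul_zero, zero_add] at this
    refine this.congr' ?_
    filter_upwards [eventually_gt_atTop 0] with m hm
    field_simp
  have hle : ∀ m : ℕ, 1 / (m : ℝ) * log (u m) ≤ 1 / (m : ℝ) * (log K + -a * m) := fun m => by
    gcongr
    calc log (u m) ≤ log (K * exp (-a * m)) := log_le_log (hu m) (hup m)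
      _ = log K + -a * m := by rw [log_mul hK.ne' (exp_pos _).ne', log_exp]
  have hge : ∀ m : ℕ, 1 / (m : ℝ) * (log c + -b * m) ≤ 1 / (m : ℝ) * log (u m) := fun m => by
    gcongr
    have := log_le_log hc (hlow m)
    rw [log_mul (exp_pos _).ne' (hu m).ne', log_exp] at this
    linarith
  calc limsup (fun m : ℕ => 1 / (m : ℝ) * log (u m)) atTop
      ≤ limsup (fun m : ℕ => 1 / (m : ℝ) * (log K + -a * m)) atTop :=
        limsup_le_limsup (Eventually.of_forall hle)
          ((hlim _ _).isBoundedUnder_ge.mono_ge (Eventually.of_forall hge)).isCoboundedUnder_le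
          (hlim _ _).isBoundedUnder_le
    _ = -a := (hlim _ _).limsup_eq

section Cocycle

variable {E : Type*} [NormedAddCommGroup E] [NormedSpace ℝ E]
  {A : ℕ → E ≃L[ℝ] E} {B : ℕ → E →L[ℝ] E}

theorem cocycle_add_period {l : ℕ} (hper : Function.Periodic A l)
    (hB0 : B 0 = ContinuousLinearMap.id ℝ E)
    (hBsucc : ∀ m, B (m + 1) = (A m : E →L[ℝ] E).comp (B m)) (m : ℕ) :
    B (m + l) = B m * B l := by
  induction m with
  | zero => rw [zero_add, hB0, ← ContinuousLinearMap.one_def, one_mul]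
  | succ m ih =>
    rw [add_right_comm, hBsucc, ih, hper, hBsucc, ContinuousLinearMap.mul_def,
      ContinuousLinearMap.mul_def, ContinuousLinearMap.comp_assoc]

theorem cocycle_add_mul_period {l : ℕ} (hper : Function.Periodic A l)
    (hB0 : B 0 = ContinuousLinearMap.id ℝ E)
    (hBsucc : ∀ m, B (m + 1) = (A m : E →L[ℝ] E).comp (B m)) (s q : ℕ) :
    B (s + l * q) = B s * B l ^ q := by
  induction q with
  | zero => rw [mul_zero, add_zero, pow_zero, mul_one]
  | succ q ih => rw [mul_add_one, ← add_assoc, cocycle_add_period hper hB0 hBsucc, ih, pow_succ,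
      mul_assoc]

theorem norm_le_exp_mul_norm_cocycle_apply {b : ℝ}
    (hA : ∀ m, ‖((A m).symm : E →L[ℝ] E)‖ ≤ exp b)
    (hB0 : B 0 = ContinuousLinearMap.id ℝ E)
    (hBsucc : ∀ m, B (m + 1) = (A m : E →L[ℝ] E).comp (B m)) (η : E) (m : ℕ) :
    ‖η‖ ≤ exp (b * m) * ‖B m η‖ := by
  induction m with
  | zero => simp [hB0]
  | succ m ih =>
    have hstep : ‖B m η‖ ≤ exp b * ‖B (m + 1) η‖ := by
      calc ‖B m η‖ = ‖((A m).symm : E →L[ℝ] E) (B (m + 1) η)‖ := by simp [hBsucc]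
        _ ≤ exp b * ‖B (m + 1) η‖ := ((A m).symm : E →L[ℝ] E).le_of_opNorm_le (hA m) _
    calc ‖η‖ ≤ exp (b * m) * ‖B m η‖ := ih
      _ ≤ exp (b * m) * (exp b * ‖B (m + 1) η‖) := by gcongr
      _ = exp (b * ↑(m + 1)) * ‖B (m + 1) η‖ := by
          push_cast; rw [← mul_assoc, ← exp_add]; ring_nf

theorem tendsto_norm_smul_cocycle_period_pow [FiniteDimensional ℝ E] {χ : ℝ} {l : ℕ}
    (hl : 0 < l) (hper : Function.Periodic A l) (hB0 : B 0 = ContinuousLinearMap.id ℝ E)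
    (hBsucc : ∀ m, B (m + 1) = (A m : E →L[ℝ] E).comp (B m))
    (hsum : ∀ ξ : E, Summable fun m : ℕ => ‖B m ξ‖ ^ 2 * exp (2 * χ * m)) :
    Tendsto (fun q : ℕ => ‖(exp (χ * l) • B l) ^ q‖) atTop (𝓝 0) := by
  have hpow : ∀ q, B l ^ q = B (l * q) := fun q => by
    simpa [hB0, ← ContinuousLinearMap.one_def] using
      (cocycle_add_mul_period hper hB0 hBsucc 0 q).symm
  refine tendsto_zero_iff_norm_tendsto_zero.1
    (ContinuousLinearMap.tendsto_zero_of_tendsto_apply fun ξ => ?_)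
  rw [tendsto_zero_iff_norm_tendsto_zero]
  have hdecay : Tendsto (fun m : ℕ => ‖B m ξ‖ * exp (χ * m)) atTop (𝓝 0) :=
    tendsto_zero_of_summable_sq ((hsum ξ).congr fun m => by
      rw [mul_pow, ← exp_nat_mul]; ring_nf)
  refine (hdecay.comp (tendsto_id.const_mul_atTop' hl)).congr fun q => ?_
  rw [smul_pow, smul_apply, norm_smul, norm_of_nonneg (by positivity), ← exp_nat_mul, hpow]
  simp only [Function.comp_apply, id, Nat.cast_mul]
  ring_nf

theorem exists_norm_cocycle_le_mul_exp [FiniteDimensional ℝ E] {χ : ℝ} {l : ℕ}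
    (hl : 0 < l) (hper : Function.Periodic A l) (hB0 : B 0 = ContinuousLinearMap.id ℝ E)
    (hBsucc : ∀ m, B (m + 1) = (A m : E →L[ℝ] E).comp (B m))
    (hsum : ∀ ξ : E, Summable fun m : ℕ => ‖B m ξ‖ ^ 2 * exp (2 * χ * m)) :
    ∃ K δ, 0 < δ ∧ ∀ m : ℕ, ‖B m‖ ≤ K * exp (-(χ + δ) * m) := by
  obtain ⟨C, δ, hδ, hC⟩ := exists_norm_pow_le_mul_exp_of_tendsto_zero
    (tendsto_norm_smul_cocycle_period_pow hl hper hB0 hBsucc hsum)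
  have hv : ∀ q : ℕ, ‖B l ^ q‖ ≤ C * exp (-(χ + δ / l) * (l * q)) := fun q => by
    have hq := hC q
    rw [smul_pow, norm_smul, norm_of_nonneg (by positivity), ← exp_nat_mul] at hq
    have hl' : (l : ℝ) ≠ 0 := by positivity
    calc ‖B l ^ q‖ = exp (-(q * (χ * l))) * (exp (q * (χ * l)) * ‖B l ^ q‖) := by
          rw [← mul_assoc, ← exp_add, neg_add_cancel, exp_zero, one_mul]
      _ ≤ exp (-(q * (χ * l))) * (C * exp (-δ * q)) := by gcongr
      _ = C * exp (-(χ + δ / l) * (l * q)) := by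
          rw [mul_left_comm, ← exp_add]; congr 2; field_simp; ring
  obtain ⟨K, hK⟩ := exists_le_mul_exp_of_submultiplicative_along_multiples
    (u := fun m => ‖B m‖) hl (fun _ => norm_nonneg _) (fun _ => norm_nonneg _) hv fun s q => by
      rw [cocycle_add_mul_period hper hB0 hBsucc]; exact norm_mul_le _ _
  exact ⟨K, δ / l, by positivity, hK⟩

end Cocycle

theorem periodic_cocycle_summable_implies_hyperbolic_general
    {E : Type*} [NormedAddCommGroup E] [InnerProductSpace ℝ E]
    [FiniteDimensional ℝ E]
    (χ : ℝ) (l : ℕ) (hl : 1 ≤ l)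
    (A : ℕ → (E ≃L[ℝ] E)) (hper : ∀ n : ℕ, A (n + l) = A n)
    (B : ℕ → (E →L[ℝ] E))
    (hB0 : B 0 = ContinuousLinearMap.id ℝ E)
    (hBsucc : ∀ m : ℕ, B (m + 1) = (A m : E →L[ℝ] E).comp (B m))
    (hsum : ∀ ξ : E, Summable fun m : ℕ => ‖B m ξ‖ ^ 2 * Real.exp (2 * χ * m)) :
    ∀ ξ : E, ξ ≠ 0 →
      Filter.limsup (fun m : ℕ => (1 / (m : ℝ)) * Real.log ‖B m ξ‖) Filter.atTop < -χ := by
  intro ξ hξ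
  obtain ⟨K, δ, hδ, hB⟩ := exists_norm_cocycle_le_mul_exp hl hper hB0 hBsucc hsum
  obtain ⟨b, hb⟩ := (Function.Periodic.comp (c := l) hper
    fun a : E ≃L[ℝ] E => ‖(a.symm : E →L[ℝ] E)‖).bddAbove_range_nat hl
  have hA : ∀ m, ‖((A m).symm : E →L[ℝ] E)‖ ≤ exp b := fun m =>
    (hb ⟨m, rfl⟩).trans (by linarith [add_one_le_exp b])
  have hup : ∀ m : ℕ, ‖B m ξ‖ ≤ K * ‖ξ‖ * exp (-(χ + δ) * m) := fun m =>
    ((B m).le_opNorm ξ).trans <|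
      (mul_le_mul_of_nonneg_right (hB m) (norm_nonneg ξ)).trans_eq (by ring)
  calc limsup (fun m : ℕ => 1 / (m : ℝ) * log ‖B m ξ‖) atTop ≤ -(χ + δ) :=
        limsup_one_div_mul_log_le (norm_pos_iff.2 hξ)
          (norm_le_exp_mul_norm_cocycle_apply hA hB0 hBsucc ξ) hup
    _ < -χ := by linarith

/-- linear-cocycle form of "periodic χ-summable points are χ-hyperbolic". -/
theorem periodic_cocycle_summable_implies_hyperbolic
    {E : Type*} [NormedAddCommGroup E] [InnerProductSpace ℝ E]
    [Nontrivial E] [FiniteDimensional ℝ E]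
    (χ : ℝ) (hχ : 0 < χ) (l : ℕ) (hl : 1 ≤ l)
    (A : ℕ → (E ≃L[ℝ] E)) (hper : ∀ n : ℕ, A (n + l) = A n)
    (B : ℕ → (E →L[ℝ] E))
    (hB0 : B 0 = ContinuousLinearMap.id ℝ E)
    (hBsucc : ∀ m : ℕ, B (m + 1) = (A m : E →L[ℝ] E).comp (B m))
    (hsum : ∀ ξ : E, Summable fun m : ℕ => ‖B m ξ‖ ^ 2 * Real.exp (2 * χ * m)) :
    ∀ ξ : E, ξ ≠ 0 →
      Filter.limsup (fun m : ℕ => (1 / (m : ℝ)) * Real.log ‖B m ξ‖) Filter.atTop < -χ :=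
  periodic_cocycle_summable_implies_hyperbolic_general χ l hl A hper B hB0 hBsucc hsum
end

section
/- Let E be a finite-dimensional real inner product space, let F be a real inner product space, let χ > 0, and let (A_m)_{m≥0} be a sequence of continuous linear maps from E to F. If for every nonzero ξ ∈ E one has limsup_{m→∞} (1/m)·log‖A_m ξ‖ < −χ (with the convention that the limsup is −∞ if ‖A_m ξ‖ vanishes eventually), then sup_{ξ ∈ E, ‖ξ‖=1} ∑_{m=0}^∞ ‖A_m ξ‖² e^{2χm} < ∞. -/
/-!
Along each nonzero vector the hypothesis gives a rate `c < -χ` with `‖A m ξ‖ ≤ e^{c m}` for large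
`m`, so the weighted series is dominated by a geometric one with ratio `e^{2(c + χ)} < 1`. To make
this uniform on the unit sphere, fix an orthonormal basis `(bᵢ)`: by Cauchy–Schwarz,
`‖A m ξ‖² ≤ ‖ξ‖² ∑ᵢ ‖A m bᵢ‖²`, and the finitely many series attached to the `bᵢ` converge.
-/

open Filter Real

theorem eventually_norm_le_exp_mul_of_limsup_lt {G : Type*} [SeminormedAddCommGroup G]
    {v : ℕ → G} {c : ℝ}
    (h : limsup (fun m : ℕ => if ‖v m‖ = 0 then (⊥ : EReal)
      else (((1 / (m : ℝ)) * log ‖v m‖ : ℝ) : EReal)) atTop < c) :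
    ∀ᶠ m in atTop, ‖v m‖ ≤ exp (c * m) := by
  filter_upwards [eventually_lt_of_limsup_lt h, eventually_gt_atTop 0] with m hm hm_gt_zero
  by_cases hv : ‖v m‖ = 0
  · rw [hv]
    exact (exp_pos _).le
  have hm_pos : (0 : ℝ) < m := by exact_mod_cast hm_gt_zero
  have hlog : 1 / (m : ℝ) * log ‖v m‖ < c := by
    rw [if_neg hv] at hm
    exact_mod_cast hm
  rw [one_div_mul_eq_div, div_lt_iff₀ hm_pos] at hlog
  exact ((log_lt_iff_lt_exp ((norm_nonneg _).lt_of_ne' hv)).mp hlog).le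

theorem summable_sq_mul_exp_of_eventually_norm_le {u : ℕ → ℝ} {c χ : ℝ} (hcχ : c + χ < 0)
    (h : ∀ᶠ m in atTop, ‖u m‖ ≤ exp (c * m)) :
    Summable (fun m : ℕ => u m ^ 2 * exp (2 * χ * m)) := by
  have hgeom : Summable (fun m : ℕ => exp (2 * (c + χ)) ^ m) :=
    summable_geometric_of_lt_one (exp_pos _).le (exp_lt_one_iff.mpr (by linarith))
  refine hgeom.of_norm_bounded_eventually_nat ?_
  filter_upwards [h] with m hm
  calc ‖u m ^ 2 * exp (2 * χ * m)‖ = ‖u m‖ ^ 2 * exp (2 * χ * m) := by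
        rw [norm_mul, norm_pow, norm_of_nonneg (exp_pos _).le]
    _ ≤ exp (c * m) ^ 2 * exp (2 * χ * m) := by gcongr
    _ = exp (2 * (c + χ)) ^ m := by
        rw [← exp_nat_mul, ← exp_nat_mul, ← exp_add]
        ring_nf

theorem summable_sq_norm_mul_exp_of_limsup_lt {G : Type*} [SeminormedAddCommGroup G]
    {v : ℕ → G} {χ : ℝ}
    (h : limsup (fun m : ℕ => if ‖v m‖ = 0 then (⊥ : EReal)
      else (((1 / (m : ℝ)) * log ‖v m‖ : ℝ) : EReal)) atTop < ((-χ : ℝ) : EReal)) :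
    Summable (fun m : ℕ => ‖v m‖ ^ 2 * exp (2 * χ * m)) := by
  obtain ⟨c, hlimsup_lt_c, hc_lt⟩ := EReal.exists_between_coe_real h
  have hcχ : c + χ < 0 := by
    have : c < -χ := by exact_mod_cast hc_lt
    linarith
  exact summable_sq_mul_exp_of_eventually_norm_le hcχ <| by
    simpa only [norm_norm] using eventually_norm_le_exp_mul_of_limsup_lt hlimsup_lt_c

theorem OrthonormalBasis.norm_apply_sq_le_mul_sum {ι E F : Type*} [Fintype ι]
    [NormedAddCommGroup E] [InnerProductSpace ℝ E] [SeminormedAddCommGroup F] [NormedSpace ℝ F]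
    (b : OrthonormalBasis ι ℝ E) (T : E →ₗ[ℝ] F) (x : E) :
    ‖T x‖ ^ 2 ≤ ‖x‖ ^ 2 * ∑ i, ‖T (b i)‖ ^ 2 := by
  have hexpand : ‖T x‖ ≤ ∑ i, |inner ℝ (b i) x| * ‖T (b i)‖ := by
    conv_lhs => rw [← b.sum_repr' x, map_sum]
    refine (norm_sum_le _ _).trans_eq (Finset.sum_congr rfl fun i _ => ?_)
    rw [map_smul, norm_smul, norm_eq_abs]
  calc ‖T x‖ ^ 2 ≤ (∑ i, |inner ℝ (b i) x| * ‖T (b i)‖) ^ 2 := by gcongr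
    _ ≤ (∑ i, |inner ℝ (b i) x| ^ 2) * ∑ i, ‖T (b i)‖ ^ 2 :=
        Finset.sum_mul_sq_le_sq_mul_sq _ _ _
    _ = ‖x‖ ^ 2 * ∑ i, ‖T (b i)‖ ^ 2 := by simp_rw [sq_abs, b.sum_sq_inner_right]

theorem summable_of_exponential_contraction_general
    {E F : Type*} [NormedAddCommGroup E] [InnerProductSpace ℝ E] [FiniteDimensional ℝ E]
    [NormedAddCommGroup F] [InnerProductSpace ℝ F]
    (χ : ℝ) (A : ℕ → (E →L[ℝ] F))
    (h : ∀ ξ : E, ξ ≠ 0 →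
      Filter.limsup
        (fun m : ℕ =>
          if ‖A m ξ‖ = 0 then (⊥ : EReal)
          else (((1 / (m : ℝ)) * Real.log ‖A m ξ‖ : ℝ) : EReal))
        Filter.atTop < ((-χ : ℝ) : EReal)) :
    ∃ M : ℝ, ∀ ξ : E, ‖ξ‖ = 1 →
      Summable (fun m : ℕ => ‖A m ξ‖ ^ 2 * Real.exp (2 * χ * m)) ∧
      ∑' m : ℕ, ‖A m ξ‖ ^ 2 * Real.exp (2 * χ * m) ≤ M := by
  let b := stdOrthonormalBasis ℝ E
  let g : ℕ → ℝ := fun m => ∑ i, ‖A m (b i)‖ ^ 2 * exp (2 * χ * m)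
  have hg : Summable g := summable_sum fun i _ =>
    summable_sq_norm_mul_exp_of_limsup_lt (h _ (b.orthonormal.ne_zero i))
  have hle : ∀ ξ : E, ‖ξ‖ = 1 → ∀ m : ℕ, ‖A m ξ‖ ^ 2 * exp (2 * χ * m) ≤ g m := fun ξ hξ m => by
    simp only [g, ← Finset.sum_mul]
    gcongr
    simpa only [hξ, one_pow, one_mul, ContinuousLinearMap.coe_coe] using
      b.norm_apply_sq_le_mul_sum (A m : E →ₗ[ℝ] F) ξ
  refine ⟨∑' m, g m, fun ξ hξ => ?_⟩
  have hsum := hg.of_nonneg_of_le (fun m => by positivity) (hle ξ hξ)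
  exact ⟨hsum, hsum.tsum_le_tsum (hle ξ hξ) hg⟩

/-- χ-hyp ⊆ χ-summ, linear form: if every nonzero `ξ` satisfies
`limsup (1/m) log ‖A_m ξ‖ < -χ` (with the limsup `-∞` when norms vanish eventually,
encoded via `EReal`), then the weighted square sums are uniformly bounded over the
unit sphere. -/
theorem summable_of_exponential_contraction
    {E F : Type*} [NormedAddCommGroup E] [InnerProductSpace ℝ E] [FiniteDimensional ℝ E]
    [NormedAddCommGroup F] [InnerProductSpace ℝ F]
    (χ : ℝ) (hχ : 0 < χ) (A : ℕ → (E →L[ℝ] F))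
    (h : ∀ ξ : E, ξ ≠ 0 →
      Filter.limsup
        (fun m : ℕ =>
          if ‖A m ξ‖ = 0 then (⊥ : EReal)
          else (((1 / (m : ℝ)) * Real.log ‖A m ξ‖ : ℝ) : EReal))
        Filter.atTop < ((-χ : ℝ) : EReal)) :
    ∃ M : ℝ, ∀ ξ : E, ‖ξ‖ = 1 →
      Summable (fun m : ℕ => ‖A m ξ‖ ^ 2 * Real.exp (2 * χ * m)) ∧
      ∑' m : ℕ, ‖A m ξ‖ ^ 2 * Real.exp (2 * χ * m) ≤ M :=
  summable_of_exponential_contraction_general χ A h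
end

section
/- Let ε > 0 and ε' ≥ (3/2)ε. Let q, Q, Q' : ℤ → (0,∞) and b ∈ (0,1] satisfy: (i) for every n, q(n) ∈ {e^{−ℓε/3} : ℓ ∈ ℕ} and q(n) < ε; (ii) e^{−ε} ≤ q(n+1)/q(n) ≤ e^{ε} for every n; (iii) limsup_{n→+∞} q(n) > 0 and limsup_{n→−∞} q(n) > 0; (iv) q(n) ≤ Q(n) for every n; (v) b·Q(n) ≤ Q'(n) for every n. Then there exists q' : ℤ → (0,∞) such that: for every n, q'(n) ∈ {e^{−ℓε'/3} : ℓ ∈ ℕ} and q'(n) < ε'; e^{−ε'} ≤ q'(n+1)/q'(n) ≤ e^{ε'} for every n; limsup_{n→+∞} q'(n) > 0 and limsup_{n→−∞} q'(n) > 0; and q'(n) ≤ Q'(n) for every n. -/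
open Filter Real

/-!
Rescale `q` by `b` and round `b * q n` down to the `ε'`-grid: `q' n` is the largest
`exp (-ℓ ε' / 3)` not exceeding `b * q n`. Then `exp (-ε' / 3) * b * q n < q' n ≤ b * q n`,
so `q' ≤ b * Q ≤ Q'`, the limsups stay positive, and the one-step ratio of `q'` is that of `q`
up to a factor `exp (± ε' / 3)`, hence lies in `[exp (-ε - ε' / 3), exp (ε + ε' / 3)]`,
which is inside `[exp (-ε'), exp ε']` exactly because `ε ≤ 2 ε' / 3`.
-/

lemma exp_neg_nat_mul_div_mem_Ioc (ℓ : ℕ) {ε : ℝ} (hε : 0 ≤ ε) :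
    exp (-((ℓ : ℝ) * ε) / 3) ∈ Set.Ioc 0 1 :=
  ⟨exp_pos _, exp_le_one_iff.2 (div_nonpos_of_nonpos_of_nonneg (neg_nonpos.2 (by positivity))
    zero_le_three)⟩

lemma exists_nat_exp_neg_mul_mem_Ioc {s y : ℝ} (hs : 0 < s) (hy0 : 0 < y) (hy1 : y ≤ 1) :
    ∃ ℓ : ℕ, exp (-(ℓ * s)) ∈ Set.Ioc (exp (-s) * y) y := by
  have ht : 0 ≤ -log y / s := div_nonneg (neg_nonneg.2 (log_nonpos hy0.le hy1)) hs.le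
  refine ⟨⌈-log y / s⌉₊, ?_, ?_⟩
  · have hlt : (⌈-log y / s⌉₊ : ℝ) * s < -log y + s := by
      have := Nat.ceil_lt_add_one ht
      rwa [← lt_div_iff₀ hs, add_div, div_self hs.ne']
    calc exp (-s) * y = exp (-s + log y) := by rw [exp_add, exp_log hy0]
      _ < exp (-(⌈-log y / s⌉₊ * s)) := exp_lt_exp.2 (by linarith)
  · have hge : -log y ≤ (⌈-log y / s⌉₊ : ℝ) * s := (div_le_iff₀ hs).1 (Nat.le_ceil _)
    calc exp (-(⌈-log y / s⌉₊ * s)) ≤ exp (log y) := exp_le_exp.2 (by linarith)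
      _ = y := exp_log hy0

lemma div_mem_Icc_exp_of_mem_Ioc {a s y₁ y₂ v₁ v₂ : ℝ} (hy₁ : 0 < y₁) (hy₂ : 0 < y₂)
    (hv₁ : v₁ ∈ Set.Ioc (exp (-s) * y₁) y₁) (hv₂ : v₂ ∈ Set.Ioc (exp (-s) * y₂) y₂)
    (hy : y₂ / y₁ ∈ Set.Icc (exp (-a)) (exp a)) :
    v₂ / v₁ ∈ Set.Icc (exp (-(a + s))) (exp (a + s)) := by
  have hv₁pos : 0 < v₁ := (mul_pos (exp_pos _) hy₁).trans hv₁.1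
  constructor
  · calc exp (-(a + s)) = exp (-s) * exp (-a) := by rw [← exp_add]; ring_nf
      _ ≤ exp (-s) * (y₂ / y₁) := by gcongr; exact hy.1
      _ = exp (-s) * y₂ / y₁ := (mul_div_assoc ..).symm
      _ ≤ v₂ / v₁ := div_le_div₀ ((mul_pos (exp_pos _) hy₂).trans hv₂.1).le hv₂.1.le hv₁pos hv₁.2
  · calc v₂ / v₁ ≤ y₂ / (exp (-s) * y₁) := div_le_div₀ hy₂.le hv₂.2 (by positivity) hv₁.1.le
      _ = y₂ / y₁ / exp (-s) := by rw [div_div, mul_comm]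
      _ ≤ exp a / exp (-s) := by gcongr; exact hy.2
      _ = exp (a + s) := by rw [← exp_sub, sub_neg_eq_add]

lemma limsup_pos_of_const_mul_le {ι : Type*} {l : Filter ι} {f g : ι → ℝ} {c : ℝ} (hc : 0 < c)
    (hf : l.IsCoboundedUnder (· ≤ ·) f) (hg : l.IsBoundedUnder (· ≤ ·) g)
    (hfg : ∀ᶠ i in l, c * f i ≤ g i) (h : 0 < limsup f l) : 0 < limsup g l := by
  have hfreq : ∃ᶠ i in l, limsup f l / 2 < f i := frequently_lt_of_lt_limsup hf (half_lt_self h)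
  have hle : c * (limsup f l / 2) ≤ limsup g l :=
    le_limsup_of_frequently_le ((hfreq.and_eventually hfg).mono fun _ hi =>
      (mul_le_mul_of_nonneg_left hi.1.le hc.le).trans hi.2) hg
  have : 0 < c * (limsup f l / 2) := by positivity
  linarith

theorem weak_temperability_monotone_general
    (ε ε' : ℝ) (hε : 0 < ε) (hε' : (3 / 2) * ε ≤ ε')
    (q Q Q' : ℤ → ℝ) (b : ℝ) (hb0 : 0 < b) (hb1 : b ≤ 1)
    (hgrid : ∀ n : ℤ, ∃ ℓ : ℕ, q n = Real.exp (-((ℓ : ℝ) * ε) / 3))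
    (hless : ∀ n : ℤ, q n < ε)
    (hratio : ∀ n : ℤ, Real.exp (-ε) ≤ q (n + 1) / q n ∧ q (n + 1) / q n ≤ Real.exp ε)
    (hlimsup_top : 0 < Filter.limsup q Filter.atTop)
    (hlimsup_bot : 0 < Filter.limsup q Filter.atBot)
    (hqQ : ∀ n : ℤ, q n ≤ Q n)
    (hQQ' : ∀ n : ℤ, b * Q n ≤ Q' n) :
    ∃ q' : ℤ → ℝ,
      (∀ n : ℤ, 0 < q' n) ∧
      (∀ n : ℤ, ∃ ℓ : ℕ, q' n = Real.exp (-((ℓ : ℝ) * ε') / 3)) ∧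
      (∀ n : ℤ, q' n < ε') ∧
      (∀ n : ℤ, Real.exp (-ε') ≤ q' (n + 1) / q' n ∧ q' (n + 1) / q' n ≤ Real.exp ε') ∧
      0 < Filter.limsup q' Filter.atTop ∧
      0 < Filter.limsup q' Filter.atBot ∧
      (∀ n : ℤ, q' n ≤ Q' n) := by
  have hε'pos : 0 < ε' := by linarith
  have hq : ∀ n, q n ∈ Set.Ioc 0 1 := fun n => by
    obtain ⟨ℓ, hℓ⟩ := hgrid n
    exact hℓ ▸ exp_neg_nat_mul_div_mem_Ioc ℓ hε.le
  have hbq_le : ∀ n, b * q n ≤ q n := fun n => mul_le_of_le_one_left (hq n).1.le hb1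
  choose ℓ hℓ using fun n => exists_nat_exp_neg_mul_mem_Ioc (s := ε' / 3) (by positivity)
    (mul_pos hb0 (hq n).1) ((hbq_le n).trans (hq n).2)
  set q' : ℤ → ℝ := fun n => exp (-((ℓ n : ℝ) * ε') / 3)
  have hq' : ∀ n, q' n ∈ Set.Ioc (exp (-(ε' / 3)) * (b * q n)) (b * q n) := fun n => by
    simpa only [q', neg_div, mul_div_assoc] using hℓ n
  have hratio' : ∀ n, q' (n + 1) / q' n ∈ Set.Icc (exp (-(ε + ε' / 3))) (exp (ε + ε' / 3)) :=
    fun n => div_mem_Icc_exp_of_mem_Ioc (mul_pos hb0 (hq n).1) (mul_pos hb0 (hq (n + 1)).1)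
      (hq' n) (hq' (n + 1)) (by rw [mul_div_mul_left _ _ hb0.ne']; exact hratio n)
  have hq'_le_one : ∀ n, q' n ≤ 1 := fun n => (hq' n).2.trans ((hbq_le n).trans (hq n).2)
  have hlimsup : ∀ l : Filter ℤ, l.NeBot → 0 < limsup q l → 0 < limsup q' l := fun l _ h =>
    limsup_pos_of_const_mul_le (mul_pos (exp_pos _) hb0)
      (isCoboundedUnder_le_of_le l fun n => (hq n).1.le) (isBoundedUnder_of ⟨1, hq'_le_one⟩)
      (Eventually.of_forall fun n => (mul_assoc _ _ _).trans_le (hq' n).1.le) h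
  refine ⟨q', fun n => exp_pos _, fun n => ⟨ℓ n, rfl⟩, fun n => ?_, fun n => ⟨?_, ?_⟩,
    hlimsup _ inferInstance hlimsup_top, hlimsup _ inferInstance hlimsup_bot, fun n => ?_⟩
  · calc q' n ≤ q n := (hq' n).2.trans (hbq_le n)
      _ < ε := hless n
      _ ≤ ε' := by linarith
  · exact (exp_le_exp.2 (by linarith)).trans (hratio' n).1
  · exact (hratio' n).2.trans (exp_le_exp.2 (by linarith))
  · calc q' n ≤ b * q n := (hq' n).2
      _ ≤ b * Q n := by gcongr; exact hqQ n
      _ ≤ Q' n := hQQ' n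

/-- HWT_χ^ε ⊆ HWT_χ^{ε'} for ε' ≥ (3/2)ε, stated along a single
orbit: an ε-weak temperability function can be converted into an ε'-weak
temperability function. -/
theorem weak_temperability_monotone
    (ε ε' : ℝ) (hε : 0 < ε) (hε' : (3 / 2) * ε ≤ ε')
    (q Q Q' : ℤ → ℝ) (b : ℝ) (hb0 : 0 < b) (hb1 : b ≤ 1)
    (hqpos : ∀ n : ℤ, 0 < q n)
    (hQpos : ∀ n : ℤ, 0 < Q n) (hQ'pos : ∀ n : ℤ, 0 < Q' n)
    (hgrid : ∀ n : ℤ, ∃ ℓ : ℕ, q n = Real.exp (-((ℓ : ℝ) * ε) / 3))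
    (hless : ∀ n : ℤ, q n < ε)
    (hratio : ∀ n : ℤ, Real.exp (-ε) ≤ q (n + 1) / q n ∧ q (n + 1) / q n ≤ Real.exp ε)
    (hlimsup_top : 0 < Filter.limsup q Filter.atTop)
    (hlimsup_bot : 0 < Filter.limsup q Filter.atBot)
    (hqQ : ∀ n : ℤ, q n ≤ Q n)
    (hQQ' : ∀ n : ℤ, b * Q n ≤ Q' n) :
    ∃ q' : ℤ → ℝ,
      (∀ n : ℤ, 0 < q' n) ∧
      (∀ n : ℤ, ∃ ℓ : ℕ, q' n = Real.exp (-((ℓ : ℝ) * ε') / 3)) ∧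
      (∀ n : ℤ, q' n < ε') ∧
      (∀ n : ℤ, Real.exp (-ε') ≤ q' (n + 1) / q' n ∧ q' (n + 1) / q' n ≤ Real.exp ε') ∧
      0 < Filter.limsup q' Filter.atTop ∧
      0 < Filter.limsup q' Filter.atBot ∧
      (∀ n : ℤ, q' n ≤ Q' n) :=
  weak_temperability_monotone_general ε ε' hε hε' q Q Q' b hb0 hb1 hgrid hless hratio hlimsup_top
    hlimsup_bot hqQ hQQ'
end

section
/- Let E and F be real inner product spaces, let A : E → F be an invertible continuous linear map with ‖A⁻¹‖ ≤ κ₀ for some κ₀ > 0, and let χ > 0. Let S : E → [0,∞) and S' : F → [0,∞) be functions satisfying: S(ξ)² = 2‖ξ‖² + e^{2χ}·S'(Aξ)² for all ξ ∈ E, and S'(η)² ≥ 2‖η‖² for all η ∈ F. Then for every ξ ∈ E: (i) S'(Aξ) ≤ e^{−χ}·S(ξ), and (ii) S'(Aξ) ≥ (1/√2)·min(e^{−χ}, 1/κ₀)·S(ξ). -/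
open Real

/-!
Dropping the nonnegative term `2‖ξ‖²` from the cocycle identity gives `e^{2χ} S'(Aξ)² ≤ S(ξ)²`.
For the lower bound put `m = min(e^{-χ}, 1/κ₀)`, so that `m κ₀ ≤ 1` and `m e^χ ≤ 1`. Since
`‖ξ‖ ≤ κ₀ ‖Aξ‖`, the identity gives
`m² S(ξ)² = 2 (m‖ξ‖)² + (m e^χ)² S'(Aξ)² ≤ 2‖Aξ‖² + S'(Aξ)² ≤ 2 S'(Aξ)²`.
-/

theorem ContinuousLinearEquiv.norm_le_mul_norm_apply {𝕜 E F : Type*} [NontriviallyNormedField 𝕜]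
    [SeminormedAddCommGroup E] [SeminormedAddCommGroup F] [NormedSpace 𝕜 E] [NormedSpace 𝕜 F]
    (e : E ≃L[𝕜] F) {κ : ℝ} (he : ‖(e.symm : F →L[𝕜] E)‖ ≤ κ) (x : E) :
    ‖x‖ ≤ κ * ‖e x‖ :=
  calc ‖x‖ = ‖(e.symm : F →L[𝕜] E) (e x)‖ := by simp
    _ ≤ ‖(e.symm : F →L[𝕜] E)‖ * ‖e x‖ := ContinuousLinearMap.le_opNorm _ _
    _ ≤ κ * ‖e x‖ := by gcongr

section CocycleBounds

variable {s t n χ : ℝ}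

theorem le_exp_neg_mul_of_sq_eq (hs : 0 ≤ s) (h : s ^ 2 = 2 * n ^ 2 + exp (2 * χ) * t ^ 2) :
    t ≤ exp (-χ) * s := by
  refine le_of_sq_le_sq ?_ (by positivity)
  have hexp : exp (-χ) ^ 2 * exp (2 * χ) = 1 := by
    rw [← exp_nat_mul, ← exp_add]; norm_num
  calc t ^ 2 = exp (-χ) ^ 2 * (exp (2 * χ) * t ^ 2) := by rw [← mul_assoc, hexp, one_mul]
    _ ≤ exp (-χ) ^ 2 * s ^ 2 := by gcongr; nlinarith
    _ = (exp (-χ) * s) ^ 2 := by ring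

theorem min_exp_neg_inv_mul_le_of_sq_eq {n' κ : ℝ} (hκ : 0 ≤ κ) (ht : 0 ≤ t)
    (hn : n ≤ κ * n') (hn₀ : 0 ≤ n) (ht' : 2 * n' ^ 2 ≤ t ^ 2)
    (h : s ^ 2 = 2 * n ^ 2 + exp (2 * χ) * t ^ 2) :
    1 / √2 * min (exp (-χ)) (1 / κ) * s ≤ t := by
  set m := min (exp (-χ)) (1 / κ)
  have hm₀ : 0 ≤ m := le_min (exp_pos _).le (by positivity)
  have hmκ : m * κ ≤ 1 := by
    rcases hκ.eq_or_lt with rfl | hκ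
    · simp
    · exact (le_div_iff₀ hκ).1 (min_le_right _ _)
  have hmexp : m ^ 2 * exp (2 * χ) ≤ 1 := by
    have : m * exp χ ≤ 1 := calc
      m * exp χ ≤ exp (-χ) * exp χ := by gcongr; exact min_le_left _ _
      _ = 1 := by rw [← exp_add, neg_add_cancel, exp_zero]
    calc m ^ 2 * exp (2 * χ) = (m * exp χ) ^ 2 := by rw [mul_pow, ← exp_nat_mul]; norm_num
      _ ≤ 1 := pow_le_one₀ (by positivity) this
  have hmn : (m * n) ^ 2 ≤ n' ^ 2 := by
    calc (m * n) ^ 2 ≤ (m * (κ * n')) ^ 2 := by gcongr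
      _ = (m * κ) ^ 2 * n' ^ 2 := by ring
      _ ≤ n' ^ 2 := mul_le_of_le_one_left (sq_nonneg _) (pow_le_one₀ (by positivity) hmκ)
  refine le_of_sq_le_sq ?_ ht
  calc (1 / √2 * m * s) ^ 2 = (2 * (m * n) ^ 2 + m ^ 2 * exp (2 * χ) * t ^ 2) / 2 := by
        rw [mul_pow, mul_pow, h, div_pow, sq_sqrt zero_le_two]; ring
    _ ≤ (t ^ 2 + t ^ 2) / 2 := by
        gcongr
        · linarith
        · exact mul_le_of_le_one_left (sq_nonneg _) hmexp
    _ = t ^ 2 := by ring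

end CocycleBounds

theorem lyapunov_block_bounds_general
    {E F : Type*} [NormedAddCommGroup E] [InnerProductSpace ℝ E]
    [NormedAddCommGroup F] [InnerProductSpace ℝ F]
    (A : E ≃L[ℝ] F) (κ₀ : ℝ)
    (hA : ‖(A.symm : F →L[ℝ] E)‖ ≤ κ₀)
    (χ : ℝ)
    (S : E → ℝ) (S' : F → ℝ)
    (hS : ∀ ξ : E, 0 ≤ S ξ) (hS' : ∀ η : F, 0 ≤ S' η)
    (hco : ∀ ξ : E, (S ξ) ^ 2 = 2 * ‖ξ‖ ^ 2 + Real.exp (2 * χ) * (S' (A ξ)) ^ 2)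
    (hlow : ∀ η : F, 2 * ‖η‖ ^ 2 ≤ (S' η) ^ 2) :
    ∀ ξ : E,
      S' (A ξ) ≤ Real.exp (-χ) * S ξ ∧
      (1 / Real.sqrt 2) * min (Real.exp (-χ)) (1 / κ₀) * S ξ ≤ S' (A ξ) := by
  intro ξ
  have hκ₀ : 0 ≤ κ₀ := (norm_nonneg _).trans hA
  exact ⟨le_exp_neg_mul_of_sq_eq (hS ξ) (hco ξ),
    min_exp_neg_inv_mul_le_of_sq_eq hκ₀ (hS' _) (A.norm_le_mul_norm_apply hA ξ) (norm_nonneg ξ)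
      (hlow _) (hco ξ)⟩

/-- bounds on the stable block of the Pesin–Oseledec reduction:
`S'(Aξ) ≤ e^{-χ} S(ξ)` and `S'(Aξ) ≥ (1/√2) min(e^{-χ}, 1/κ₀) S(ξ)`. -/
theorem lyapunov_block_bounds
    {E F : Type*} [NormedAddCommGroup E] [InnerProductSpace ℝ E]
    [NormedAddCommGroup F] [InnerProductSpace ℝ F]
    (A : E ≃L[ℝ] F) (κ₀ : ℝ) (hκ₀ : 0 < κ₀)
    (hA : ‖(A.symm : F →L[ℝ] E)‖ ≤ κ₀)
    (χ : ℝ) (hχ : 0 < χ)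
    (S : E → ℝ) (S' : F → ℝ)
    (hS : ∀ ξ : E, 0 ≤ S ξ) (hS' : ∀ η : F, 0 ≤ S' η)
    (hco : ∀ ξ : E, (S ξ) ^ 2 = 2 * ‖ξ‖ ^ 2 + Real.exp (2 * χ) * (S' (A ξ)) ^ 2)
    (hlow : ∀ η : F, 2 * ‖η‖ ^ 2 ≤ (S' η) ^ 2) :
    ∀ ξ : E,
      S' (A ξ) ≤ Real.exp (-χ) * S ξ ∧
      (1 / Real.sqrt 2) * min (Real.exp (-χ)) (1 / κ₀) * S ξ ≤ S' (A ξ) :=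
  lyapunov_block_bounds_general A κ₀ hA χ S S' hS hS' hco hlow
end
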